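/- arXiv:1910.14381 — 3 statements merged into one kernel-verified Lean document; each statement's English description precedes it below -/
import Mathlib

section
/- Every commutative regular expression is provably equal (with respect to ≡) to a finite union of unambiguous linear expressions. -/
/-!
Pass to the quotient of expressions by `≡`, a commutative Kleene algebra. There the classes of
unions of unambiguous linear expressions form an additive submonoid, which is closed under
products and stars as soon as it contains every `(expr b₁ ∪ ⋯ ∪ expr bₙ)*`, because, writing
`u B*` for `expr(u) · (⋃_{b ∈ B} expr(b))*`, we have `u B* · v C* = (u + v) (B ∪ C)*` and
`(u B*)* = 1 ∪ u ({u} ∪ B)*`.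

For that star, induct on `n`. If `b₁, …, bₙ` are dependent, there is a relation
`∑ cᵢ bᵢ = ∑ dᵢ bᵢ` where `c` and `d` have disjoint supports and `c ≠ 0`. A word over the
`xᵢ = expr bᵢ` either uses some `xᵢ` fewer than `cᵢ` times, or contains `∏ xᵢ^cᵢ = ∏ xᵢ^dᵢ`,
which can be traded for generators `xⱼ` with `cⱼ = 0`. Hence
`(∑ xᵢ)* = ∑_{cᵢ > 0} xᵢ^{<cᵢ} (∑_{j ≠ i} xⱼ)*`, and each summand has only `n - 1` generators.
-/

namespace CKAnote

/-- Commutative regular expressions over an alphabet `α`. -/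
inductive CRE (α : Type) where
  | zero : CRE α
  | one : CRE α
  | letter : α → CRE α
  | mul : CRE α → CRE α → CRE α
  | union : CRE α → CRE α → CRE α
  | star : CRE α → CRE α

variable {α : Type} [Fintype α] [DecidableEq α]

/-- Semantics of a commutative regular expression as a set of Parikh vectors. -/
def sem : CRE α → Set (α → ℕ)
  | .zero => ∅
  | .one => {0}
  | .letter a => {Pi.single a 1}
  | .mul e f => {w | ∃ u ∈ sem e, ∃ v ∈ sem f, w = u + v}
  | .union e f => sem e ∪ sem f
  | .star e => ↑(AddSubmonoid.closure (sem e))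

/-- Provable equality: the smallest congruence containing the axioms of
commutative Kleene algebra (where `e ≤ f` abbreviates `e ∪ f ≡ f`). -/
inductive CKA : CRE α → CRE α → Prop
  | refl (e : CRE α) : CKA e e
  | symm {e f : CRE α} : CKA e f → CKA f e
  | trans {e f g : CRE α} : CKA e f → CKA f g → CKA e g
  | mul_congr {e e' f f' : CRE α} : CKA e e' → CKA f f' → CKA (e.mul f) (e'.mul f')
  | union_congr {e e' f f' : CRE α} : CKA e e' → CKA f f' → CKA (e.union f) (e'.union f')
  | star_congr {e e' : CRE α} : CKA e e' → CKA e.star e'.star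
  | mul_assoc (e f g : CRE α) : CKA (e.mul (f.mul g)) ((e.mul f).mul g)
  | mul_comm (e f : CRE α) : CKA (e.mul f) (f.mul e)
  | one_mul (e : CRE α) : CKA (CRE.one.mul e) e
  | union_assoc (e f g : CRE α) : CKA (e.union (f.union g)) ((e.union f).union g)
  | union_comm (e f : CRE α) : CKA (e.union f) (f.union e)
  | union_idem (e : CRE α) : CKA (e.union e) e
  | zero_union (e : CRE α) : CKA (CRE.zero.union e) e
  | zero_mul (e : CRE α) : CKA (CRE.zero.mul e) CRE.zero
  | left_distrib (e f g : CRE α) : CKA (e.mul (f.union g)) ((e.mul f).union (e.mul g))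
  | star_unfold (e : CRE α) : CKA ((CRE.one.union (e.mul e.star)).union e.star) e.star
  | star_lfp {e f : CRE α} : CKA ((e.mul f).union f) f → CKA ((e.star.mul f).union f) f

/-- `e ≤ f`, i.e. `e ∪ f ≡ f`. -/
def leq (e f : CRE α) : Prop := CKA (e.union f) f

/-- `e^n`, the `n`-fold product of `e` with itself. -/
def pow (e : CRE α) : ℕ → CRE α
  | 0 => CRE.one
  | n + 1 => e.mul (pow e n)

/-- `e^{<n}`, i.e. `(e ∪ 1)^(n-1)` for `n > 0` and `0` for `n = 0`. -/
def ltPow (e : CRE α) : ℕ → CRE α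
  | 0 => CRE.zero
  | n + 1 => pow (e.union CRE.one) n

/-- Finite union of a list of expressions. -/
def unionList : List (CRE α) → CRE α
  | [] => CRE.zero
  | e :: l => e.union (unionList l)

/-- Finite product of a list of expressions. -/
def prodList : List (CRE α) → CRE α
  | [] => CRE.one
  | e :: l => e.mul (prodList l)

/-- `expr(u)`: the product over `a ∈ α` of `u a` copies of the letter `a`. -/
noncomputable def exprVec (u : α → ℕ) : CRE α :=
  prodList ((Finset.univ : Finset α).toList.map (fun a => pow (CRE.letter a) (u a)))

/-- The union `⋃_{b ∈ B} expr(b)` for a finite set of Parikh vectors `B`. -/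
noncomputable def unionVecs (B : Finset (α → ℕ)) : CRE α :=
  unionList (B.toList.map exprVec)

/-- The linear expression `expr(u) · (⋃_{b ∈ B} expr(b))*`. -/
noncomputable def linExpr (u : α → ℕ) (B : Finset (α → ℕ)) : CRE α :=
  (exprVec u).mul (unionVecs B).star

/-- A finite set of Parikh vectors is independent when every Parikh vector
admits at most one representation as an `ℕ`-linear combination of its elements. -/
def Independent (B : Finset (α → ℕ)) : Prop :=
  ∀ c d : (α → ℕ) → ℕ, (∑ b ∈ B, c b • b) = (∑ b ∈ B, d b • b) → ∀ b ∈ B, c b = d b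

/-- The semilinear expression associated to a list of linear data:
the finite union of the corresponding linear expressions. -/
noncomputable def semiLin (L : List ((α → ℕ) × Finset (α → ℕ))) : CRE α :=
  unionList (L.map (fun p => linExpr p.1 p.2))

/-- The dimension of a semilinear expression: the maximum of the dimensions
of its linear components. -/
def dimSL (L : List ((α → ℕ) × Finset (α → ℕ))) : ℕ :=
  (L.map (fun p => p.2.card)).foldr max 0

/-- Finitary (star-free) expressions. -/
def NoStar : CRE α → Prop
  | .zero => True
  | .one => True
  | .letter _ => True
  | .mul e f => NoStar e ∧ NoStar f
  | .union e f => NoStar e ∧ NoStar f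
  | .star _ => False

/-- Coordinatewise embedding of `ℕ^α` into `ℚ^α`. -/
def toQ (v : α → ℕ) : α → ℚ := fun a => (v a : ℚ)

open Computability

class CommKleeneAlgebra (K : Type*) extends KleeneAlgebra K, CommSemiring K

section IdemSemiring

variable {K ι : Type*} [IdemSemiring K]

theorem sum_le_of_forall_le {s : Finset ι} {f : ι → K} {a : K} (h : ∀ i ∈ s, f i ≤ a) :
    ∑ i ∈ s, f i ≤ a :=
  Finset.sum_induction f (· ≤ a) (fun _ _ => add_le) zero_le h

theorem mul_geom_sum_le (a : K) (n : ℕ) :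
    a * ∑ m ∈ Finset.range n, a ^ m ≤ ∑ m ∈ Finset.range n, a ^ m + a ^ n := by
  rw [add_comm, ← geom_sum_succ', geom_sum_succ]
  exact le_self_add

theorem one_le_geom_sum (a : K) {n : ℕ} (hn : 0 < n) : 1 ≤ ∑ m ∈ Finset.range n, a ^ m := by
  simpa using Finset.single_le_sum (f := (a ^ ·)) (fun _ _ => zero_le) (Finset.mem_range.2 hn)

end IdemSemiring

section KleeneAlgebra

variable {K : Type*} [KleeneAlgebra K] {a b : K}

theorem kstar_eq_geom_sum_add (a : K) (n : ℕ) :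
    a∗ = ∑ m ∈ Finset.range n, a ^ m + a ^ n * a∗ := by
  induction n with
  | zero => simp
  | succ n ih =>
    conv_lhs => rw [ih, ← one_add_mul_kstar]
    rw [Finset.sum_range_succ, pow_succ, mul_add, mul_one, mul_assoc, add_assoc]

theorem geom_sum_le_kstar (a : K) (n : ℕ) : ∑ m ∈ Finset.range n, a ^ m ≤ a∗ := by
  conv_rhs => rw [kstar_eq_geom_sum_add a n]
  exact le_self_add

theorem kstar_le_kstar_of_le_kstar (h : a ≤ b∗) : a∗ ≤ b∗ :=
  (kstar_mono h).trans (kstar_idem b).le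

theorem pow_le_kstar_of_le_kstar (h : a ≤ b∗) (n : ℕ) : a ^ n ≤ b∗ :=
  pow_le_kstar.trans (kstar_le_kstar_of_le_kstar h)

theorem mul_le_kstar {c : K} (ha : a ≤ c∗) (hb : b ≤ c∗) : a * b ≤ c∗ :=
  (mul_le_mul' ha hb).trans (kstar_mul_kstar c).le

end KleeneAlgebra

section CommKleeneAlgebra

variable {K ι : Type*} [CommKleeneAlgebra K]

theorem kstar_add (a b : K) : (a + b)∗ = a∗ * b∗ := by
  refine le_antisymm (kstar_le_of_mul_le_right (one_le_mul one_le_kstar one_le_kstar) ?_) ?_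
  · calc (a + b) * (a∗ * b∗) = a * a∗ * b∗ + a∗ * (b * b∗) := by ring
      _ ≤ a∗ * b∗ :=
          add_le (by gcongr; exact mul_kstar_le_kstar) (by gcongr; exact mul_kstar_le_kstar)
  · calc a∗ * b∗ ≤ (a + b)∗ * (a + b)∗ := by gcongr <;> simp
      _ = (a + b)∗ := kstar_mul_kstar _

theorem prod_le_kstar {s : Finset ι} {f : ι → K} {b : K} (h : ∀ i ∈ s, f i ≤ b∗) :
    ∏ i ∈ s, f i ≤ b∗ :=
  Finset.prod_induction f (· ≤ b∗) (fun _ _ => mul_le_kstar) one_le_kstar h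

theorem kstar_mul_kstar_eq_one_add (a b : K) : (a * b∗)∗ = 1 + a * (a + b)∗ := by
  have hb : b∗ ≤ (a + b)∗ := kstar_mono le_add_self
  have h : b∗ * (a * b∗)∗ = (a + b)∗ := by
    refine le_antisymm ?_ ?_
    · have hab : a * b∗ ≤ (a + b)∗ := mul_le_kstar (le_self_add.trans le_kstar) hb
      exact mul_le_kstar hb (kstar_le_kstar_of_le_kstar hab)
    · rw [kstar_add, mul_comm]
      gcongr
      exact le_mul_of_one_le_right' one_le_kstar
  calc (a * b∗)∗ = 1 + b∗ * (a * b∗)∗ * a := by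
        conv_lhs => rw [← one_add_mul_kstar]
        ring
    _ = 1 + a * (a + b)∗ := by rw [h, mul_comm]

end CommKleeneAlgebra

section Deficit

variable {K ι : Type*} [CommKleeneAlgebra K] [DecidableEq ι] (x : ι → K) (c : ι → ℕ)

/-- The words over the generators `x i`, `i ∈ s`, in which some `x i` occurs fewer than `c i`
times. -/
def deficit (s : Finset ι) : K :=
  ∑ i ∈ s, (∑ m ∈ Finset.range (c i), x i ^ m) * (∑ j ∈ s.erase i, x j)∗

variable {x c}

theorem mul_le_deficit {s : Finset ι} {i : ι} (hi : i ∈ s) {y : K}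
    (hy : y ≤ (∑ j ∈ s.erase i, x j)∗) :
    (∑ m ∈ Finset.range (c i), x i ^ m) * y ≤ deficit x c s :=
  (mul_le_mul' le_rfl hy).trans
    (Finset.single_le_sum (f := fun i => (∑ m ∈ Finset.range (c i), x i ^ m) *
      (∑ j ∈ s.erase i, x j)∗) (fun _ _ => zero_le) hi)

theorem le_kstar_sum_erase {s : Finset ι} {i j : ι} (hj : j ∈ s) (hij : j ≠ i) :
    x j ≤ (∑ k ∈ s.erase i, x k)∗ :=
  (Finset.single_le_sum (fun _ _ => zero_le) (Finset.mem_erase.2 ⟨hij, hj⟩)).trans le_kstar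

theorem deficit_le_kstar_sum (s : Finset ι) : deficit x c s ≤ (∑ i ∈ s, x i)∗ := by
  refine sum_le_of_forall_le fun i hi => ?_
  have hx : x i ≤ (∑ j ∈ s, x j)∗ :=
    (Finset.single_le_sum (fun _ _ => zero_le) hi).trans le_kstar
  exact mul_le_kstar ((geom_sum_le_kstar _ _).trans (kstar_le_kstar_of_le_kstar hx))
    (kstar_mono (Finset.sum_le_sum_of_subset (Finset.erase_subset i s)))

theorem kstar_sum_le_prod_mul_add_deficit (s : Finset ι) :
    (∑ i ∈ s, x i)∗ ≤ (∏ i ∈ s, x i ^ c i) * (∑ i ∈ s, x i)∗ + deficit x c s := by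
  induction s using Finset.cons_induction with
  | empty => simp
  | cons a s ha ih =>
    set S := ∑ i ∈ s, x i
    set G := ∑ m ∈ Finset.range (c a), x a ^ m
    have hlow : G * S∗ ≤ deficit x c (Finset.cons a s ha) :=
      mul_le_deficit (Finset.mem_cons_self a s) (by rw [Finset.erase_cons])
    have hhigh : x a ^ c a * (x a)∗ * deficit x c s ≤ deficit x c (Finset.cons a s ha) := by
      rw [deficit, Finset.mul_sum]
      refine sum_le_of_forall_le fun i hi => ?_
      have hxa : x a ≤ (∑ j ∈ (Finset.cons a s ha).erase i, x j)∗ :=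
        le_kstar_sum_erase (Finset.mem_cons_self a s) (ne_of_mem_of_not_mem hi ha).symm
      rw [mul_left_comm]
      refine mul_le_deficit (Finset.mem_cons_of_mem hi) ?_
      exact mul_le_kstar (mul_le_kstar (pow_le_kstar_of_le_kstar hxa _)
        (kstar_le_kstar_of_le_kstar hxa)) (kstar_mono (Finset.sum_le_sum_of_subset
          (Finset.erase_subset_erase i (Finset.subset_cons ha))))
    calc (∑ i ∈ Finset.cons a s ha, x i)∗ = G * S∗ + x a ^ c a * ((x a)∗ * S∗) := by
          rw [Finset.sum_cons, kstar_add]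
          conv_lhs => rw [kstar_eq_geom_sum_add (x a) (c a)]
          ring
      _ ≤ G * S∗ + x a ^ c a * ((x a)∗ * ((∏ i ∈ s, x i ^ c i) * S∗ + deficit x c s)) := by
          gcongr
      _ = (∏ i ∈ Finset.cons a s ha, x i ^ c i) * (∑ i ∈ Finset.cons a s ha, x i)∗ +
            (G * S∗ + x a ^ c a * (x a)∗ * deficit x c s) := by
          rw [Finset.prod_cons, Finset.sum_cons, kstar_add]
          ring
      _ ≤ _ := add_le_add_right (add_le hlow hhigh) _

theorem pow_mul_kstar_sum_erase_le {s : Finset ι} {i : ι} (hi : i ∈ s) (hci : 0 < c i) :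
    x i ^ c i * (∑ j ∈ s.erase i, x j)∗ ≤
      deficit x c s + (∏ j ∈ s, x j ^ c j) * deficit x c s := by
  set Si := ∑ j ∈ s.erase i, x j
  have hSi : Si∗ ≤ deficit x c s :=
    (le_mul_of_one_le_left' (one_le_geom_sum (x i) hci)).trans (mul_le_deficit hi le_rfl)
  have hDi : x i ^ c i * deficit x c (s.erase i) ≤ deficit x c s := by
    rw [deficit, Finset.mul_sum]
    refine sum_le_of_forall_le fun k hk => ?_
    obtain ⟨hki, hks⟩ := Finset.mem_erase.1 hk
    rw [mul_left_comm]
    refine mul_le_deficit hks (mul_le_kstar (pow_le_kstar_of_le_kstar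
      (le_kstar_sum_erase hi hki.symm) _) (kstar_mono (Finset.sum_le_sum_of_subset ?_)))
    exact Finset.erase_subset_erase k (Finset.erase_subset i s)
  calc x i ^ c i * Si∗
      ≤ x i ^ c i * ((∏ j ∈ s.erase i, x j ^ c j) * Si∗ + deficit x c (s.erase i)) := by
        gcongr
        exact kstar_sum_le_prod_mul_add_deficit _
    _ = (∏ j ∈ s, x j ^ c j) * Si∗ + x i ^ c i * deficit x c (s.erase i) := by
        rw [← Finset.mul_prod_erase s (fun j => x j ^ c j) hi]
        ring
    _ ≤ deficit x c s + (∏ j ∈ s, x j ^ c j) * deficit x c s := by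
        rw [add_comm]
        gcongr

theorem mul_deficit_le {s : Finset ι} {i : ι} (hi : i ∈ s) :
    x i * deficit x c s ≤ deficit x c s + (∏ j ∈ s, x j ^ c j) * deficit x c s := by
  conv_lhs => rw [deficit, Finset.mul_sum]
  refine sum_le_of_forall_le fun j hj => ?_
  by_cases hij : i = j
  · subst hij
    rcases (c i).eq_zero_or_pos with hci | hci
    · simp [hci]
    calc x i * ((∑ m ∈ Finset.range (c i), x i ^ m) * (∑ j ∈ s.erase i, x j)∗)
        ≤ (∑ m ∈ Finset.range (c i), x i ^ m + x i ^ c i) * (∑ j ∈ s.erase i, x j)∗ := by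
          rw [← mul_assoc]
          gcongr
          exact mul_geom_sum_le _ _
      _ = (∑ m ∈ Finset.range (c i), x i ^ m) * (∑ j ∈ s.erase i, x j)∗ +
            x i ^ c i * (∑ j ∈ s.erase i, x j)∗ := add_mul _ _ _
      _ ≤ deficit x c s + (∏ j ∈ s, x j ^ c j) * deficit x c s :=
          add_le (le_self_add.trans' (mul_le_deficit hi le_rfl))
            (pow_mul_kstar_sum_erase_le hi hci)
  · rw [mul_left_comm]
    exact le_self_add.trans' (mul_le_deficit hj
      (mul_le_kstar (le_kstar_sum_erase hi hij) le_rfl))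

theorem kstar_sum_le_kstar_prod_mul_deficit {s : Finset ι} (hc : ∃ i ∈ s, 0 < c i) :
    (∑ i ∈ s, x i)∗ ≤ (∏ i ∈ s, x i ^ c i)∗ * deficit x c s := by
  set X := ∏ i ∈ s, x i ^ c i
  set D := deficit x c s
  obtain ⟨i₀, hi₀, hci₀⟩ := hc
  have hD : 1 ≤ D :=
    (one_le_mul (one_le_geom_sum _ hci₀) one_le_kstar).trans (mul_le_deficit hi₀ le_rfl)
  refine kstar_le_of_mul_le_right (one_le_mul one_le_kstar hD) ?_
  have hSD : (∑ i ∈ s, x i) * D ≤ X∗ * D := by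
    rw [Finset.sum_mul]
    refine sum_le_of_forall_le fun i hi => (mul_deficit_le hi).trans ?_
    calc D + X * D = (1 + X) * D := by ring
      _ ≤ X∗ * D := by gcongr; exact add_le one_le_kstar le_kstar
  calc (∑ i ∈ s, x i) * (X∗ * D) = X∗ * ((∑ i ∈ s, x i) * D) := by ring
    _ ≤ X∗ * (X∗ * D) := by gcongr
    _ = X∗ * D := by rw [← mul_assoc, kstar_mul_kstar]

theorem kstar_sum_eq_deficit {s : Finset ι} {d : ι → ℕ}
    (hrel : ∏ i ∈ s, x i ^ c i = ∏ i ∈ s, x i ^ d i) (hdisj : ∀ i ∈ s, c i = 0 ∨ d i = 0)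
    (hc : ∃ i ∈ s, 0 < c i) :
    (∑ i ∈ s, x i)∗ = deficit x c s := by
  refine le_antisymm ((kstar_sum_le_kstar_prod_mul_deficit hc).trans ?_) (deficit_le_kstar_sum s)
  rw [deficit, Finset.mul_sum]
  refine Finset.sum_le_sum fun i hi => ?_
  rcases (c i).eq_zero_or_pos with hci | hci
  · simp [hci]
  have hX : ∏ j ∈ s, x j ^ c j ≤ (∑ j ∈ s.erase i, x j)∗ := by
    rw [hrel]
    refine prod_le_kstar fun j hj => ?_
    rcases eq_or_ne j i with rfl | hji
    · rw [(hdisj j hj).resolve_left hci.ne', pow_zero]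
      exact one_le_kstar
    · exact pow_le_kstar_of_le_kstar (le_kstar_sum_erase hj hji) _
  rw [mul_left_comm]
  exact mul_le_mul' le_rfl (mul_le_kstar (kstar_le_kstar_of_le_kstar hX) le_rfl)

end Deficit

instance ckaSetoid : Setoid (CRE α) := ⟨CKA, ⟨CKA.refl, CKA.symm, CKA.trans⟩⟩

abbrev Q (α : Type) [Fintype α] [DecidableEq α] : Type := Quotient (ckaSetoid (α := α))

abbrev mk (e : CRE α) : Q α := Quotient.mk _ e

theorem mk_eq_mk {e f : CRE α} : mk e = mk f ↔ CKA e f := Quotient.eq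

instance : Zero (Q α) := ⟨mk .zero⟩
instance : One (Q α) := ⟨mk .one⟩
instance : Add (Q α) := ⟨Quotient.map₂ .union fun _ _ h _ _ h' => CKA.union_congr h h'⟩
instance : Mul (Q α) := ⟨Quotient.map₂ .mul fun _ _ h _ _ h' => CKA.mul_congr h h'⟩
instance : KStar (Q α) := ⟨Quotient.map .star fun _ _ h => CKA.star_congr h⟩

theorem mk_union (e f : CRE α) : mk (e.union f) = mk e + mk f := rfl
theorem mk_mul (e f : CRE α) : mk (e.mul f) = mk e * mk f := rfl
theorem mk_star (e : CRE α) : mk e.star = (mk e)∗ := rfl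

instance : CommSemiring (Q α) where
  nsmul := nsmulRec
  npow := npowRec
  add_assoc := by rintro ⟨a⟩ ⟨b⟩ ⟨c⟩; exact Quot.sound (CKA.union_assoc a b c).symm
  zero_add := by rintro ⟨a⟩; exact Quot.sound (CKA.zero_union a)
  add_zero := by rintro ⟨a⟩; exact Quot.sound ((CKA.union_comm a _).trans (CKA.zero_union a))
  add_comm := by rintro ⟨a⟩ ⟨b⟩; exact Quot.sound (CKA.union_comm a b)
  mul_assoc := by rintro ⟨a⟩ ⟨b⟩ ⟨c⟩; exact Quot.sound (CKA.mul_assoc a b c).symm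
  one_mul := by rintro ⟨a⟩; exact Quot.sound (CKA.one_mul a)
  mul_one := by rintro ⟨a⟩; exact Quot.sound ((CKA.mul_comm a _).trans (CKA.one_mul a))
  mul_comm := by rintro ⟨a⟩ ⟨b⟩; exact Quot.sound (CKA.mul_comm a b)
  zero_mul := by rintro ⟨a⟩; exact Quot.sound (CKA.zero_mul a)
  mul_zero := by rintro ⟨a⟩; exact Quot.sound ((CKA.mul_comm a _).trans (CKA.zero_mul a))
  left_distrib := by rintro ⟨a⟩ ⟨b⟩ ⟨c⟩; exact Quot.sound (CKA.left_distrib a b c)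
  right_distrib := by
    rintro ⟨a⟩ ⟨b⟩ ⟨c⟩
    exact Quot.sound <| ((CKA.mul_comm _ c).trans (CKA.left_distrib c a b)).trans
      (CKA.union_congr (CKA.mul_comm c a) (CKA.mul_comm c b))

instance : IdemSemiring (Q α) :=
  IdemSemiring.ofSemiring fun a => Quotient.inductionOn a fun a => Quot.sound (CKA.union_idem a)

theorem one_add_mul_kstar_add_kstar (a : Q α) : 1 + a * a∗ + a∗ = a∗ :=
  Quotient.inductionOn a fun a => Quot.sound (CKA.star_unfold a)

theorem kstar_mul_le_of_mul_le (a b : Q α) (h : a * b ≤ b) : a∗ * b ≤ b := by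
  induction a using Quotient.ind
  induction b using Quotient.ind
  rw [← add_eq_right_iff_le] at h ⊢
  exact Quot.sound (CKA.star_lfp (Quotient.exact h))

instance : CommKleeneAlgebra (Q α) where
  __ := (inferInstance : IdemSemiring (Q α))
  __ := (inferInstance : CommSemiring (Q α))
  one_le_kstar a := (le_self_add.trans le_self_add).trans_eq (one_add_mul_kstar_add_kstar a)
  mul_kstar_le_kstar a := (le_add_self.trans le_self_add).trans_eq (one_add_mul_kstar_add_kstar a)
  kstar_mul_le_kstar a :=
    (mul_comm (a∗) a).trans_le <|
      (le_add_self.trans le_self_add).trans_eq (one_add_mul_kstar_add_kstar a)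
  kstar_mul_le_self := kstar_mul_le_of_mul_le
  mul_kstar_le_self a b h := by
    rw [mul_comm] at h ⊢
    exact kstar_mul_le_of_mul_le a b h

theorem mk_pow (e : CRE α) (n : ℕ) : mk (pow e n) = mk e ^ n := by
  induction n with
  | zero => rfl
  | succ n ih => rw [pow, mk_mul, ih, pow_succ']

theorem mk_unionList (l : List (CRE α)) : mk (unionList l) = (l.map mk).sum := by
  induction l with
  | nil => rfl
  | cons e l ih => rw [unionList, mk_union, ih, List.map_cons, List.sum_cons]

theorem mk_prodList (l : List (CRE α)) : mk (prodList l) = (l.map mk).prod := by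
  induction l with
  | nil => rfl
  | cons e l ih => rw [prodList, mk_mul, ih, List.map_cons, List.prod_cons]

noncomputable def vec (u : α → ℕ) : Q α := ∏ a, mk (.letter a) ^ u a

noncomputable def vecs (B : Finset (α → ℕ)) : Q α := ∑ b ∈ B, vec b

theorem mk_exprVec (u : α → ℕ) : mk (exprVec u) = vec u := by
  rw [exprVec, mk_prodList, List.map_map, vec, ← Finset.prod_map_toList]
  exact congrArg List.prod (List.map_congr_left fun a _ => mk_pow _ _)

theorem mk_unionVecs (B : Finset (α → ℕ)) : mk (unionVecs B) = vecs B := by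
  rw [unionVecs, mk_unionList, List.map_map, vecs, ← Finset.sum_map_toList]
  exact congrArg List.sum (List.map_congr_left fun b _ => mk_exprVec b)

theorem mk_semiLin (L : List ((α → ℕ) × Finset (α → ℕ))) :
    mk (semiLin L) = (L.map fun p => vec p.1 * (vecs p.2)∗).sum := by
  rw [semiLin, mk_unionList, List.map_map]
  refine congrArg List.sum (List.map_congr_left fun p _ => ?_)
  rw [Function.comp_apply, linExpr, mk_mul, mk_exprVec, mk_star, mk_unionVecs]

theorem vec_zero : vec (0 : α → ℕ) = 1 := by simp [vec]

theorem vec_add (u v : α → ℕ) : vec (u + v) = vec u * vec v := by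
  simp only [vec, Pi.add_apply, pow_add, Finset.prod_mul_distrib]

theorem vec_nsmul (n : ℕ) (u : α → ℕ) : vec (n • u) = vec u ^ n := by
  simp only [vec, Pi.smul_apply, smul_eq_mul, mul_comm n, pow_mul, Finset.prod_pow]

theorem vec_single (a : α) : vec (Pi.single a 1) = mk (.letter a) := by
  rw [vec, Finset.prod_eq_single a (fun b _ hb => by rw [Pi.single_eq_of_ne hb, pow_zero])
    (fun h => absurd (Finset.mem_univ a) h), Pi.single_eq_same, pow_one]

theorem vec_sum {ι : Type*} (s : Finset ι) (v : ι → α → ℕ) (c : ι → ℕ) :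
    vec (∑ i ∈ s, c i • v i) = ∏ i ∈ s, vec (v i) ^ c i := by
  induction s using Finset.cons_induction with
  | empty => exact vec_zero
  | cons a s ha ih => rw [Finset.sum_cons, Finset.prod_cons, vec_add, vec_nsmul, ih]

theorem vecs_union (B C : Finset (α → ℕ)) : vecs (B ∪ C) = vecs B + vecs C := by
  rw [vecs, vecs, vecs, ← Finset.sum_union_inter, add_eq_left_iff_le.2
    (Finset.sum_le_sum_of_subset (Finset.inter_subset_left.trans Finset.subset_union_left))]

theorem vecs_insert (u : α → ℕ) (B : Finset (α → ℕ)) : vecs (insert u B) = vec u + vecs B := by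
  rw [Finset.insert_eq, vecs_union, vecs, Finset.sum_singleton]

theorem exists_rel_of_not_independent {ι : Type} {B : Finset (ι → ℕ)} (hB : ¬ Independent B) :
    ∃ c d : (ι → ℕ) → ℕ, ∑ b ∈ B, c b • b = ∑ b ∈ B, d b • b ∧
      (∀ b, c b = 0 ∨ d b = 0) ∧ ∃ b ∈ B, 0 < c b := by
  simp only [Independent, not_forall] at hB
  obtain ⟨c, d, hcd, b₀, hb₀, hne⟩ := hB
  have hrel : ∑ b ∈ B, (c b - d b) • b = ∑ b ∈ B, (d b - c b) • b := by
    have hc : ∀ b, c b - d b + min (c b) (d b) = c b := fun b => by omega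
    have hd : ∀ b, d b - c b + min (c b) (d b) = d b := fun b => by omega
    refine add_right_cancel (b := ∑ b ∈ B, min (c b) (d b) • b) ?_
    simp only [← Finset.sum_add_distrib, ← add_smul, hc, hd, hcd]
  rcases Nat.lt_or_gt_of_ne hne with h | h
  · exact ⟨_, _, hrel.symm, fun b => by omega, b₀, hb₀, Nat.sub_pos_of_lt h⟩
  · exact ⟨_, _, hrel, fun b => by omega, b₀, hb₀, Nat.sub_pos_of_lt h⟩

def unambSemilinear : AddSubmonoid (Q α) where
  carrier := {q | ∃ L, (∀ p ∈ L, Independent p.2) ∧ mk (semiLin L) = q}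
  zero_mem' := ⟨[], by simp, rfl⟩
  add_mem' := by
    rintro _ _ ⟨L₁, h₁, rfl⟩ ⟨L₂, h₂, rfl⟩
    refine ⟨L₁ ++ L₂, fun p hp => (List.mem_append.1 hp).elim (h₁ p) (h₂ p), ?_⟩
    simp only [mk_semiLin, List.map_append, List.sum_append]

theorem linear_mem_unambSemilinear (u : α → ℕ) {B : Finset (α → ℕ)} (hB : Independent B) :
    vec u * (vecs B)∗ ∈ unambSemilinear :=
  ⟨[(u, B)], by simpa using hB, by simp [mk_semiLin]⟩

theorem vec_mul_mem_unambSemilinear (w : α → ℕ) {q : Q α} (hq : q ∈ unambSemilinear) :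
    vec w * q ∈ unambSemilinear := by
  obtain ⟨L, hL, rfl⟩ := hq
  refine ⟨L.map fun p => (w + p.1, p.2), fun p hp => ?_, ?_⟩
  · obtain ⟨q, hq, rfl⟩ := List.mem_map.1 hp
    exact hL q hq
  simp only [mk_semiLin, List.map_map, ← List.sum_map_mul_left]
  refine congrArg List.sum (List.map_congr_left fun p _ => ?_)
  simp only [Function.comp_apply, vec_add, mul_assoc]

theorem kstar_vecs_mem_unambSemilinear (B : Finset (α → ℕ)) : (vecs B)∗ ∈ unambSemilinear := by
  induction B using Finset.strongInduction with
  | H B ih =>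
    by_cases hB : Independent B
    · simpa [vec_zero] using linear_mem_unambSemilinear 0 hB
    obtain ⟨c, d, hrel, hdisj, hc⟩ := exists_rel_of_not_independent hB
    have hprod : ∏ b ∈ B, vec b ^ c b = ∏ b ∈ B, vec b ^ d b := by
      rw [← vec_sum, ← vec_sum, hrel]
    rw [vecs, kstar_sum_eq_deficit hprod (fun b _ => hdisj b) hc, deficit]
    refine sum_mem fun b hb => ?_
    rw [Finset.sum_mul]
    refine sum_mem fun m _ => ?_
    rw [← vec_nsmul]
    exact vec_mul_mem_unambSemilinear _ (ih _ (Finset.erase_ssubset hb))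

theorem one_mem_unambSemilinear : (1 : Q α) ∈ unambSemilinear := by
  simpa [vec_zero, vecs] using kstar_vecs_mem_unambSemilinear (∅ : Finset (α → ℕ))

theorem linear_mul_linear_mem_unambSemilinear (u v : α → ℕ) (B C : Finset (α → ℕ)) :
    vec u * (vecs B)∗ * (vec v * (vecs C)∗) ∈ unambSemilinear := by
  have h : vec u * (vecs B)∗ * (vec v * (vecs C)∗) = vec (u + v) * (vecs (B ∪ C))∗ := by
    rw [vec_add, vecs_union, kstar_add]
    ring
  exact h ▸ vec_mul_mem_unambSemilinear _ (kstar_vecs_mem_unambSemilinear _)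

theorem mul_mem_unambSemilinear {q r : Q α} (hq : q ∈ unambSemilinear)
    (hr : r ∈ unambSemilinear) : q * r ∈ unambSemilinear := by
  obtain ⟨L₁, -, rfl⟩ := hq
  obtain ⟨L₂, -, rfl⟩ := hr
  rw [mk_semiLin, mk_semiLin, ← List.sum_map_mul_right]
  refine list_sum_mem (List.forall_mem_map.2 fun p _ => ?_)
  rw [← List.sum_map_mul_left]
  refine list_sum_mem (List.forall_mem_map.2 fun p' _ => ?_)
  exact linear_mul_linear_mem_unambSemilinear _ _ _ _

theorem kstar_linear_mem_unambSemilinear (u : α → ℕ) (B : Finset (α → ℕ)) :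
    (vec u * (vecs B)∗)∗ ∈ unambSemilinear := by
  rw [kstar_mul_kstar_eq_one_add, ← vecs_insert]
  exact add_mem one_mem_unambSemilinear
    (vec_mul_mem_unambSemilinear u (kstar_vecs_mem_unambSemilinear _))

theorem kstar_mem_unambSemilinear {q : Q α} (hq : q ∈ unambSemilinear) :
    q∗ ∈ unambSemilinear := by
  obtain ⟨L, -, rfl⟩ := hq
  rw [mk_semiLin]
  induction L with
  | nil => simpa using one_mem_unambSemilinear
  | cons p L ih =>
    rw [List.map_cons, List.sum_cons, kstar_add]
    exact mul_mem_unambSemilinear (kstar_linear_mem_unambSemilinear _ _) ih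

theorem mk_mem_unambSemilinear (e : CRE α) : mk e ∈ unambSemilinear := by
  induction e with
  | zero => exact zero_mem _
  | one => exact one_mem_unambSemilinear
  | letter a =>
    simpa [vec_single, vecs] using
      linear_mem_unambSemilinear (Pi.single a 1) (B := ∅) (by simp [Independent])
  | mul e f he hf => exact mul_mem_unambSemilinear he hf
  | union e f he hf => exact add_mem he hf
  | star e he => exact kstar_mem_unambSemilinear he

/-- Every commutative regular expression is provably equal to a finite
union of unambiguous linear expressions. -/
theorem decomposition (e : CRE α) :
    ∃ L : List ((α → ℕ) × Finset (α → ℕ)),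
      (∀ p ∈ L, Independent p.2) ∧ CKA e (semiLin L) := by
  obtain ⟨L, hL, h⟩ := mk_mem_unambSemilinear e
  exact ⟨L, hL, mk_eq_mk.1 h.symm⟩

end CKAnote
end

section
/- Given two linear expressions e and f, if ⟦e⟧ ⊆ ⟦f⟧ then e ≤ f is derivable, i.e. e ∪ f ≡ f. -/
/-!
Suppose `⟦u A*⟧ ⊆ ⟦v B*⟧`. For `a ∈ A` every `u + n • a` lies in `v + ⟨B⟩`; comparing
coefficient vectors of these representations, Dickson's lemma gives `m < n` with coefficientwise
increase, so `(n - m) • a ∈ ⟨B⟩`: each generator of `A` has a positive multiple `k • a` in `⟨B⟩`.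

In the calculus, `A* ≤ ∏_{a ∈ A} a*`, and in front of `B*`, which absorbs `a ^ k`, each factor
`a*` can be replaced by the finite union of the `a ^ i`, `i < k` (this is where the induction
rule of the star is used). This leaves a finite union of terms `expr(u + s) B*` with
`s ∈ ⟨A⟩`, each below `expr(v) B*` since `u + s = v + c` with `c ∈ ⟨B⟩`.
-/

theorem exists_pos_nsmul_mem_closure {M : Type*} [AddCancelCommMonoid M] {s : Finset M}
    {u v a : M} (h : ∀ n : ℕ, ∃ c ∈ AddSubmonoid.closure (s : Set M), v + c = u + n • a) :
    ∃ k, 0 < k ∧ k • a ∈ AddSubmonoid.closure (s : Set M) := by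
  choose c hc hcn using h
  choose coeff hcoeff using fun n => AddSubmonoid.mem_closure_finset'.1 (hc n)
  obtain ⟨m, n, hmn, hle⟩ := wellQuasiOrdered_le coeff
  have hshift : c m + (n - m) • a = c n := by
    refine add_left_cancel (a := v) ?_
    rw [← add_assoc, hcn m, add_assoc, ← add_nsmul, Nat.add_sub_cancel' hmn.le, hcn n]
  have hdiff : c n = c m + ∑ i : s, (coeff n i - coeff m i) • i.1 := by
    rw [hcoeff n, hcoeff m, ← Finset.sum_add_distrib]
    refine Finset.sum_congr rfl fun i _ => ?_
    rw [← add_smul, Nat.add_sub_cancel' (hle i)]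
  refine ⟨n - m, Nat.sub_pos_of_lt hmn, ?_⟩
  rw [add_left_cancel (hshift.trans hdiff)]
  exact sum_mem fun i _ => nsmul_mem (AddSubmonoid.subset_closure i.2) _

namespace CKAnote

open scoped Pointwise

variable {α : Type}

local infix:50 " ≡ₖ " => CKA
local infix:50 " ≤ₖ " => leq

section Algebra

theorem leq_of_cka {e f : CRE α} (h : e ≡ₖ f) : e ≤ₖ f :=
  (CKA.union_congr h (CKA.refl f)).trans (CKA.union_idem f)

theorem leq_refl (e : CRE α) : e ≤ₖ e := CKA.union_idem e

theorem leq_trans {e f g : CRE α} (h₁ : e ≤ₖ f) (h₂ : f ≤ₖ g) : e ≤ₖ g :=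
  (((CKA.union_congr (CKA.refl e) h₂.symm).trans (CKA.union_assoc e f g)).trans
    (CKA.union_congr h₁ (CKA.refl g))).trans h₂

theorem leq_of_cka_of_leq {e f g : CRE α} (h₁ : e ≡ₖ f) (h₂ : f ≤ₖ g) : e ≤ₖ g :=
  leq_trans (leq_of_cka h₁) h₂

theorem leq_of_leq_of_cka {e f g : CRE α} (h₁ : e ≤ₖ f) (h₂ : f ≡ₖ g) : e ≤ₖ g :=
  leq_trans h₁ (leq_of_cka h₂)

instance : Trans (@CKA α) (@CKA α) (@CKA α) := ⟨CKA.trans⟩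
instance : Trans (@leq α) (@leq α) (@leq α) := ⟨leq_trans⟩
instance : Trans (@CKA α) (@leq α) (@leq α) := ⟨leq_of_cka_of_leq⟩

theorem le_union_left (e f : CRE α) : e ≤ₖ e.union f :=
  (CKA.union_assoc e e f).trans (CKA.union_congr (CKA.union_idem e) (CKA.refl f))

theorem le_union_right (e f : CRE α) : f ≤ₖ e.union f :=
  leq_of_leq_of_cka (le_union_left f e) (CKA.union_comm f e)

theorem union_le {e f g : CRE α} (h₁ : e ≤ₖ g) (h₂ : f ≤ₖ g) : e.union f ≤ₖ g :=
  ((CKA.union_assoc e f g).symm.trans (CKA.union_congr (CKA.refl e) h₂)).trans h₁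

theorem zero_le (e : CRE α) : CRE.zero ≤ₖ e := CKA.zero_union e

theorem mul_le_mul_left {f f' : CRE α} (e : CRE α) (h : f ≤ₖ f') : e.mul f ≤ₖ e.mul f' :=
  (CKA.left_distrib e f f').symm.trans (CKA.mul_congr (CKA.refl e) h)

theorem mul_le_mul_right {e e' : CRE α} (h : e ≤ₖ e') (f : CRE α) : e.mul f ≤ₖ e'.mul f :=
  leq_of_cka_of_leq (CKA.mul_comm e f) (leq_of_leq_of_cka (mul_le_mul_left f h) (CKA.mul_comm f e'))

theorem mul_le_mul {e e' f f' : CRE α} (h₁ : e ≤ₖ e') (h₂ : f ≤ₖ f') : e.mul f ≤ₖ e'.mul f' :=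
  leq_trans (mul_le_mul_right h₁ f) (mul_le_mul_left e' h₂)

theorem cka_mul_one (e : CRE α) : e.mul CRE.one ≡ₖ e :=
  (CKA.mul_comm e .one).trans (CKA.one_mul e)

theorem cka_mul_left_comm (e f g : CRE α) : e.mul (f.mul g) ≡ₖ f.mul (e.mul g) :=
  (CKA.mul_assoc e f g).trans ((CKA.mul_congr (CKA.mul_comm e f) (CKA.refl g)).trans
    (CKA.mul_assoc f e g).symm)

theorem one_le_star (e : CRE α) : CRE.one ≤ₖ e.star :=
  leq_trans (le_union_left _ _) (CKA.star_unfold e)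

theorem mul_star_le (e : CRE α) : e.mul e.star ≤ₖ e.star :=
  leq_trans (le_union_right _ _) (CKA.star_unfold e)

theorem le_mul_star (e f : CRE α) : e ≤ₖ e.mul f.star :=
  leq_of_cka_of_leq (cka_mul_one e).symm (mul_le_mul_left e (one_le_star f))

theorem star_le_of_mul_le {e f : CRE α} (hone : CRE.one ≤ₖ f) (hmul : e.mul f ≤ₖ f) :
    e.star ≤ₖ f :=
  leq_of_cka_of_leq (cka_mul_one e.star).symm
    (leq_trans (mul_le_mul_left _ hone) (CKA.star_lfp hmul))

theorem star_mul_star_le (e : CRE α) : e.star.mul e.star ≤ₖ e.star :=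
  CKA.star_lfp (mul_star_le e)

theorem le_star (e : CRE α) : e ≤ₖ e.star :=
  leq_trans (le_mul_star e e) (mul_star_le e)

theorem star_union_le (e f : CRE α) : (e.union f).star ≤ₖ e.star.mul f.star := by
  refine star_le_of_mul_le (leq_of_cka_of_leq (CKA.one_mul _).symm
    (mul_le_mul (one_le_star e) (one_le_star f))) ?_
  calc (e.union f).mul (e.star.mul f.star)
      ≡ₖ (e.star.mul f.star).mul (e.union f) := CKA.mul_comm _ _
    _ ≡ₖ ((e.star.mul f.star).mul e).union ((e.star.mul f.star).mul f) := CKA.left_distrib _ _ _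
    _ ≤ₖ e.star.mul f.star := union_le ?_ ?_
  · calc (e.star.mul f.star).mul e
        ≡ₖ (e.mul e.star).mul f.star := (CKA.mul_comm _ _).trans (CKA.mul_assoc _ _ _)
      _ ≤ₖ e.star.mul f.star := mul_le_mul_right (mul_star_le e) _
  · calc (e.star.mul f.star).mul f
        ≡ₖ e.star.mul (f.mul f.star) :=
          (CKA.mul_assoc _ _ _).symm.trans (CKA.mul_congr (CKA.refl _) (CKA.mul_comm _ _))
      _ ≤ₖ e.star.mul f.star := mul_le_mul_left _ (mul_star_le f)

theorem cka_pow_add (e : CRE α) (m n : ℕ) : pow e (m + n) ≡ₖ (pow e m).mul (pow e n) := by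
  induction m with
  | zero => rw [Nat.zero_add]; exact (CKA.one_mul _).symm
  | succ m ih =>
    rw [Nat.succ_add]
    exact (CKA.mul_congr (CKA.refl e) ih).trans (CKA.mul_assoc e (pow e m) (pow e n))

theorem le_unionList_of_mem {e : CRE α} {l : List (CRE α)} (h : e ∈ l) :
    e ≤ₖ unionList l := by
  induction l with
  | nil => cases h
  | cons f l ih =>
    rcases List.mem_cons.1 h with rfl | h
    · exact le_union_left _ _
    · exact leq_trans (ih h) (le_union_right _ _)

theorem unionList_le {l : List (CRE α)} {f : CRE α} (h : ∀ e ∈ l, e ≤ₖ f) :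
    unionList l ≤ₖ f := by
  induction l with
  | nil => exact zero_le f
  | cons e l ih =>
    exact union_le (h e List.mem_cons_self) (ih fun e' he' => h e' (List.mem_cons_of_mem _ he'))

theorem cka_mul_unionList (x : CRE α) (l : List (CRE α)) :
    x.mul (unionList l) ≡ₖ unionList (l.map x.mul) := by
  induction l with
  | nil => exact (CKA.mul_comm x .zero).trans (CKA.zero_mul x)
  | cons e l ih => exact (CKA.left_distrib x e _).trans (CKA.union_congr (CKA.refl _) ih)

theorem cka_prodList_congr {β : Type*} (l : List β) {f g : β → CRE α}
    (h : ∀ b ∈ l, f b ≡ₖ g b) : prodList (l.map f) ≡ₖ prodList (l.map g) := by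
  induction l with
  | nil => exact CKA.refl _
  | cons b l ih =>
    exact CKA.mul_congr (h b List.mem_cons_self)
      (ih fun b' hb' => h b' (List.mem_cons_of_mem _ hb'))

theorem cka_prodList_map_mul {β : Type*} (l : List β) (f g : β → CRE α) :
    prodList (l.map fun b => (f b).mul (g b)) ≡ₖ
      (prodList (l.map f)).mul (prodList (l.map g)) := by
  induction l with
  | nil => exact (CKA.one_mul _).symm
  | cons b l ih =>
    refine (CKA.mul_congr (CKA.refl _) ih).trans ?_
    exact (CKA.mul_assoc _ _ _).symm.trans
      ((CKA.mul_congr (CKA.refl (f b)) (cka_mul_left_comm _ _ _)).trans (CKA.mul_assoc _ _ _))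

theorem cka_prodList_map_one {β : Type*} (l : List β) :
    prodList (l.map fun _ => (CRE.one : CRE α)) ≡ₖ CRE.one := by
  induction l with
  | nil => exact CKA.refl _
  | cons _ l ih => exact (CKA.one_mul _).trans ih

theorem star_zero_le_one : (CRE.zero : CRE α).star ≤ₖ CRE.one :=
  star_le_of_mul_le (leq_refl _) (leq_of_cka_of_leq (CKA.zero_mul _) (zero_le _))

theorem star_unionList_le (l : List (CRE α)) :
    (unionList l).star ≤ₖ prodList (l.map CRE.star) := by
  induction l with
  | nil => exact star_zero_le_one
  | cons e l ih => exact leq_trans (star_union_le e _) (mul_le_mul_left _ ih)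

-- The union of the `e ^ i * y`, `i < k`, is closed under left multiplication by `e`.
theorem star_mul_le_of_pow_mul_le {e y : CRE α} {k : ℕ} (hk : 0 < k)
    (h : (pow e k).mul y ≤ₖ y) :
    e.star.mul y ≤ₖ unionList ((List.range k).map fun i => (pow e i).mul y) := by
  set g := unionList ((List.range k).map fun i => (pow e i).mul y)
  have hmem : ∀ i < k, (pow e i).mul y ≤ₖ g := fun i hi =>
    le_unionList_of_mem (List.mem_map_of_mem (List.mem_range.2 hi))
  have hy : y ≤ₖ g := leq_of_cka_of_leq (CKA.one_mul y).symm (hmem 0 hk)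
  have hstep : e.mul g ≤ₖ g := by
    refine leq_of_cka_of_leq (cka_mul_unionList e _) (unionList_le ?_)
    simp only [List.map_map, List.mem_map, List.mem_range]
    rintro _ ⟨i, hi, rfl⟩
    refine leq_of_cka_of_leq (CKA.mul_assoc e (pow e i) y) ?_
    rcases Nat.lt_or_ge (i + 1) k with hlt | hge
    · exact hmem (i + 1) hlt
    · obtain rfl : i + 1 = k := by omega
      exact leq_trans h hy
  exact leq_trans (mul_le_mul_left _ hy) (CKA.star_lfp hstep)

end Algebra

section Semantics

variable [DecidableEq α]

theorem sem_mul (e f : CRE α) : sem (e.mul f) = sem e + sem f := by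
  ext w
  simp [sem, Set.mem_add, eq_comm]

theorem sem_pow_letter (a : α) (n : ℕ) : sem (pow (CRE.letter a) n) = {Pi.single a n} := by
  induction n with
  | zero => simp [pow, sem]
  | succ n ih =>
    rw [pow, sem_mul, ih, sem, Set.singleton_add_singleton, ← Pi.single_add, add_comm]

theorem sem_prodList_map {β : Type*} (l : List β) {g : β → CRE α} {f : β → α → ℕ}
    (h : ∀ b, sem (g b) = {f b}) : sem (prodList (l.map g)) = {(l.map f).sum} := by
  induction l with
  | nil => simp [prodList, sem]
  | cons b l ih => rw [List.map_cons, prodList, sem_mul, h, ih, Set.singleton_add_singleton,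
      List.map_cons, List.sum_cons]

end Semantics

section Vectors

variable [Fintype α]

theorem cka_exprVec_add (u v : α → ℕ) : exprVec (u + v) ≡ₖ (exprVec u).mul (exprVec v) :=
  (cka_prodList_congr _ fun _ _ => cka_pow_add _ _ _).trans (cka_prodList_map_mul _ _ _)

theorem cka_exprVec_zero : exprVec (0 : α → ℕ) ≡ₖ CRE.one :=
  (cka_prodList_congr _ fun _ _ => CKA.refl _).trans (cka_prodList_map_one _)

theorem cka_pow_exprVec (a : α → ℕ) (n : ℕ) : pow (exprVec a) n ≡ₖ exprVec (n • a) := by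
  induction n with
  | zero => rw [zero_nsmul]; exact cka_exprVec_zero.symm
  | succ n ih =>
    rw [succ_nsmul']
    exact (CKA.mul_congr (CKA.refl _) ih).trans (cka_exprVec_add _ _).symm

theorem exprVec_le_star_of_mem_closure {B : Finset (α → ℕ)} {w : α → ℕ}
    (h : w ∈ AddSubmonoid.closure (B : Set (α → ℕ))) : exprVec w ≤ₖ (unionVecs B).star := by
  induction h using AddSubmonoid.closure_induction with
  | mem b hb =>
    exact leq_trans (le_unionList_of_mem (List.mem_map_of_mem (Finset.mem_toList.2 hb)))
      (le_star _)
  | zero => exact leq_of_cka_of_leq cka_exprVec_zero (one_le_star _)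
  | add x y _ _ ihx ihy =>
    exact leq_of_cka_of_leq (cka_exprVec_add x y)
      (leq_trans (mul_le_mul ihx ihy) (star_mul_star_le _))

theorem exprVec_mul_star_le {B : Finset (α → ℕ)} {w : α → ℕ}
    (h : w ∈ AddSubmonoid.closure (B : Set (α → ℕ))) :
    (exprVec w).mul (unionVecs B).star ≤ₖ (unionVecs B).star :=
  leq_trans (mul_le_mul_right (exprVec_le_star_of_mem_closure h) _) (star_mul_star_le _)

theorem exprVec_add_mul_star_le_linExpr (v : α → ℕ) {B : Finset (α → ℕ)} {c : α → ℕ}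
    (h : c ∈ AddSubmonoid.closure (B : Set (α → ℕ))) :
    (exprVec (v + c)).mul (unionVecs B).star ≤ₖ linExpr v B :=
  calc (exprVec (v + c)).mul (unionVecs B).star
      ≡ₖ ((exprVec v).mul (exprVec c)).mul (unionVecs B).star :=
        CKA.mul_congr (cka_exprVec_add v c) (CKA.refl _)
    _ ≡ₖ (exprVec v).mul ((exprVec c).mul (unionVecs B).star) := (CKA.mul_assoc _ _ _).symm
    _ ≤ₖ linExpr v B := mul_le_mul_left _ (exprVec_mul_star_le h)

theorem exprVec_mul_prodList_star_mul_le {S : Set (α → ℕ)} {Z F : CRE α} (l : List (α → ℕ))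
    (hlS : ∀ a ∈ l, a ∈ S) (hZ : ∀ a ∈ l, ∃ k, 0 < k ∧ (exprVec (k • a)).mul Z ≤ₖ Z)
    (w : α → ℕ)
    (hF : ∀ s ∈ AddSubmonoid.closure S, (exprVec (w + s)).mul Z ≤ₖ F) :
    (exprVec w).mul ((prodList ((l.map exprVec).map CRE.star)).mul Z) ≤ₖ F := by
  induction l generalizing w with
  | nil =>
    have h0 := hF 0 (zero_mem _)
    rw [add_zero] at h0
    exact leq_of_cka_of_leq (CKA.mul_congr (CKA.refl _) (CKA.one_mul Z)) h0
  | cons a l ih =>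
    obtain ⟨k, hk, hkZ⟩ := hZ a List.mem_cons_self
    set P := prodList ((l.map exprVec).map CRE.star)
    set y := (exprVec w).mul (P.mul Z)
    have hpow : ∀ i : ℕ,
        (pow (exprVec a) i).mul y ≡ₖ (exprVec w).mul (P.mul ((exprVec (i • a)).mul Z)) :=
      fun i => (CKA.mul_congr (cka_pow_exprVec a i) (CKA.refl y)).trans
        ((cka_mul_left_comm _ _ _).trans (CKA.mul_congr (CKA.refl _) (cka_mul_left_comm _ _ _)))
    have habsorb : (pow (exprVec a) k).mul y ≤ₖ y :=
      leq_of_cka_of_leq (hpow k) (mul_le_mul_left _ (mul_le_mul_left _ hkZ))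
    have hshift : ∀ i : ℕ, (exprVec w).mul (P.mul ((exprVec (i • a)).mul Z)) ≡ₖ
        (exprVec (w + i • a)).mul (P.mul Z) := fun i =>
      (CKA.mul_congr (CKA.refl _) (cka_mul_left_comm _ _ _)).trans
        ((CKA.mul_assoc _ _ _).trans (CKA.mul_congr (cka_exprVec_add _ _).symm (CKA.refl _)))
    calc (exprVec w).mul (((exprVec a).star.mul P).mul Z)
        ≡ₖ (exprVec a).star.mul y :=
          (CKA.mul_congr (CKA.refl _) (CKA.mul_assoc _ _ _).symm).trans (cka_mul_left_comm _ _ _)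
      _ ≤ₖ unionList ((List.range k).map fun i => (pow (exprVec a) i).mul y) :=
          star_mul_le_of_pow_mul_le hk habsorb
      _ ≤ₖ F := by
          refine unionList_le ?_
          simp only [List.mem_map]
          rintro _ ⟨i, -, rfl⟩
          refine leq_of_cka_of_leq ((hpow i).trans (hshift i))
            (ih (fun b hb => hlS b (.tail a hb)) (fun b hb => hZ b (.tail a hb)) (w + i • a)
              fun s hs => ?_)
          have hia : i • a ∈ AddSubmonoid.closure S :=
            nsmul_mem (AddSubmonoid.subset_closure (hlS a List.mem_cons_self)) i
          rw [add_assoc]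
          exact hF _ (add_mem hia hs)

section Inclusion

variable [DecidableEq α]

theorem sem_exprVec (u : α → ℕ) : sem (exprVec u) = {u} := by
  rw [exprVec, sem_prodList_map _ fun a => sem_pow_letter a (u a), Finset.sum_map_toList,
    Finset.univ_sum_single]

theorem sem_unionVecs (B : Finset (α → ℕ)) : sem (unionVecs B) = B := by
  suffices h : ∀ l : List (α → ℕ), sem (unionList (l.map exprVec)) = {x | x ∈ l} by
    rw [unionVecs, h]; simp
  intro l
  induction l with
  | nil => simp [unionList, sem]
  | cons a l ih => ext w; simp [unionList, sem, sem_exprVec, ih]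

theorem sem_linExpr (u : α → ℕ) (A : Finset (α → ℕ)) :
    sem (linExpr u A) = (u + ·) '' AddSubmonoid.closure (A : Set (α → ℕ)) := by
  rw [linExpr, sem_mul, sem_exprVec, Set.singleton_add, sem, sem_unionVecs]

/-- Inclusion of linear expressions: if `⟦e⟧ ⊆ ⟦f⟧` for linear `e`, `f`,
then `e ≤ f` is derivable. -/
theorem baseInclusion (u v : α → ℕ) (A B : Finset (α → ℕ))
    (h : sem (linExpr u A) ⊆ sem (linExpr v B)) :
    leq (linExpr u A) (linExpr v B) := by
  have hsub : ∀ s ∈ AddSubmonoid.closure (A : Set (α → ℕ)),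
      ∃ c ∈ AddSubmonoid.closure (B : Set (α → ℕ)), v + c = u + s := fun s hs => by
    have hmem := h (by rw [sem_linExpr]; exact Set.mem_image_of_mem _ hs)
    rwa [sem_linExpr] at hmem
  have hperiod : ∀ a ∈ A.toList,
      ∃ k, 0 < k ∧ (exprVec (k • a)).mul (unionVecs B).star ≤ₖ (unionVecs B).star := by
    intro a ha
    obtain ⟨k, hk, hka⟩ := exists_pos_nsmul_mem_closure fun n =>
      hsub (n • a) (nsmul_mem (AddSubmonoid.subset_closure (Finset.mem_toList.1 ha)) n)
    exact ⟨k, hk, exprVec_mul_star_le hka⟩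
  calc linExpr u A
      ≤ₖ (exprVec u).mul
          ((prodList ((A.toList.map exprVec).map CRE.star)).mul (unionVecs B).star) :=
        mul_le_mul_left _ (leq_trans (star_unionList_le _) (le_mul_star _ _))
    _ ≤ₖ linExpr v B := by
        refine exprVec_mul_prodList_star_mul_le _ (fun a => Finset.mem_toList.1) hperiod u
          fun s hs => ?_
        obtain ⟨c, hc, hcs⟩ := hsub s hs
        rw [← hcs]
        exact exprVec_add_mul_star_le_linExpr v hc

end Inclusion

end Vectors

end CKAnote
end

section
/- Derivability of Redko's star-continuity identities: for any commutative regular expression e and any natural number n > 0, the identity e* ≡ e^{<n} · (e^n)* is derivable from the finitary axioms. -/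
open Computability

theorem add_one_pow_succ {K : Type*} [IdemSemiring K] (a : K) :
    ∀ m : ℕ, (a + 1) ^ (m + 1) = (a + 1) ^ m + a ^ (m + 1)
  | 0 => by rw [pow_zero, zero_add, pow_one, pow_one, add_comm]
  | m + 1 => calc
      (a + 1) ^ (m + 2) = (a + 1) * ((a + 1) ^ m + a ^ (m + 1)) := by
        rw [pow_succ', add_one_pow_succ a m]
      _ = (a + 1) ^ (m + 1) + a ^ (m + 1) + a ^ (m + 2) := by
        rw [mul_add, ← pow_succ', add_mul, one_mul, ← pow_succ', add_comm (a ^ (m + 2)),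
          ← add_assoc]
      _ = (a + 1) ^ (m + 1) + a ^ (m + 2) := by
        rw [add_one_pow_succ a m, add_assoc ((a + 1) ^ m), add_idem]

section KleeneAlgebra

variable {K : Type*} [KleeneAlgebra K]

theorem kstar_eq_add_one_pow_mul_kstar_pow (a : K) (m : ℕ) :
    a∗ = (a + 1) ^ m * (a ^ (m + 1))∗ := by
  set g := (a + 1) ^ m
  have one_le_g : 1 ≤ g := Left.one_le_pow_of_le le_add_self m
  have g_le : g ≤ a∗ := calc
    g ≤ (a∗) ^ m := pow_le_pow_left' (add_le le_kstar one_le_kstar) m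
    _ ≤ a∗ := pow_le_kstar.trans_eq (kstar_idem a)
  apply le_antisymm
  · apply kstar_le_of_mul_le_right (le_mul_of_le_of_one_le one_le_g one_le_kstar)
    calc a * (g * (a ^ (m + 1))∗) ≤ (a + 1) ^ (m + 1) * (a ^ (m + 1))∗ := by
          rw [← mul_assoc, pow_succ' (a + 1)]; gcongr; exact le_self_add
      _ = g * (a ^ (m + 1))∗ + a ^ (m + 1) * (a ^ (m + 1))∗ := by
          rw [add_one_pow_succ, add_mul]
      _ ≤ g * (a ^ (m + 1))∗ :=
          add_le le_rfl (mul_kstar_le_kstar.trans (le_mul_of_one_le_left' one_le_g))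
  · calc g * (a ^ (m + 1))∗ ≤ a∗ * a∗ := by grw [g_le, pow_le_kstar, kstar_idem]
      _ = a∗ := kstar_mul_kstar a

end KleeneAlgebra

namespace CKAnote

variable {α : Type}

instance CKA.setoid : Setoid (CRE α) where
  r := CKA
  iseqv := ⟨CKA.refl, CKA.symm, CKA.trans⟩

def FreeCKA (α : Type) : Type := Quotient (CKA.setoid (α := α))

namespace FreeCKA

def mk : CRE α → FreeCKA α := Quotient.mk _

lemma mk_eq_mk_iff {e f : CRE α} : mk e = mk f ↔ CKA e f := Quotient.eq

instance : Zero (FreeCKA α) := ⟨mk .zero⟩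
instance : One (FreeCKA α) := ⟨mk .one⟩
instance : Add (FreeCKA α) := ⟨Quotient.map₂ CRE.union fun _ _ h _ _ h' => CKA.union_congr h h'⟩
instance : Mul (FreeCKA α) := ⟨Quotient.map₂ CRE.mul fun _ _ h _ _ h' => CKA.mul_congr h h'⟩
instance : KStar (FreeCKA α) := ⟨Quotient.map CRE.star fun _ _ h => CKA.star_congr h⟩

instance : CommSemiring (FreeCKA α) where
  add_assoc := by rintro ⟨e⟩ ⟨f⟩ ⟨g⟩; exact Quotient.sound (CKA.union_assoc e f g).symm
  zero_add := by rintro ⟨e⟩; exact Quotient.sound (CKA.zero_union e)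
  add_zero := by rintro ⟨e⟩; exact Quotient.sound ((CKA.union_comm e _).trans (CKA.zero_union e))
  add_comm := by rintro ⟨e⟩ ⟨f⟩; exact Quotient.sound (CKA.union_comm e f)
  nsmul := nsmulRec
  mul_assoc := by rintro ⟨e⟩ ⟨f⟩ ⟨g⟩; exact Quotient.sound (CKA.mul_assoc e f g).symm
  one_mul := by rintro ⟨e⟩; exact Quotient.sound (CKA.one_mul e)
  mul_one := by rintro ⟨e⟩; exact Quotient.sound ((CKA.mul_comm e _).trans (CKA.one_mul e))
  zero_mul := by rintro ⟨e⟩; exact Quotient.sound (CKA.zero_mul e)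
  mul_zero := by rintro ⟨e⟩; exact Quotient.sound ((CKA.mul_comm e _).trans (CKA.zero_mul e))
  left_distrib := by rintro ⟨e⟩ ⟨f⟩ ⟨g⟩; exact Quotient.sound (CKA.left_distrib e f g)
  right_distrib := by
    rintro ⟨e⟩ ⟨f⟩ ⟨g⟩
    exact Quotient.sound <| (CKA.mul_comm _ g).trans <| (CKA.left_distrib g e f).trans <|
      CKA.union_congr (CKA.mul_comm g e) (CKA.mul_comm g f)
  mul_comm := by rintro ⟨e⟩ ⟨f⟩; exact Quotient.sound (CKA.mul_comm e f)

instance : IdemCommSemiring (FreeCKA α) where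
  mul_comm := mul_comm
  __ := IdemSemiring.ofSemiring (by rintro ⟨e⟩; exact Quotient.sound (CKA.union_idem e))

lemma one_add_mul_kstar_le (x : FreeCKA α) : 1 + x * x∗ ≤ x∗ := by
  induction x using Quotient.ind with
  | _ e => exact Quotient.sound (CKA.star_unfold e)

protected lemma kstar_mul_le_self (x y : FreeCKA α) (h : x * y ≤ y) : x∗ * y ≤ y := by
  induction x using Quotient.ind
  induction y using Quotient.ind
  exact Quotient.sound (CKA.star_lfp (Quotient.exact h))

instance : KleeneAlgebra (FreeCKA α) where
  one_le_kstar x := (add_le_iff.1 (one_add_mul_kstar_le x)).1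
  mul_kstar_le_kstar x := (add_le_iff.1 (one_add_mul_kstar_le x)).2
  kstar_mul_le_kstar x := mul_comm x x∗ ▸ (add_le_iff.1 (one_add_mul_kstar_le x)).2
  mul_kstar_le_self x y h := mul_comm x∗ y ▸ FreeCKA.kstar_mul_le_self x y (mul_comm y x ▸ h)
  kstar_mul_le_self := FreeCKA.kstar_mul_le_self

lemma mk_pow (e : CRE α) : ∀ n, mk (pow e n) = mk e ^ n
  | 0 => rfl
  | n + 1 => by rw [pow_succ', ← mk_pow e n]; rfl

end FreeCKA

variable [Fintype α] [DecidableEq α]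

/-- Redko's star-continuity identities are derivable: for `n > 0`,
`e* ≡ e^{<n} · (e^n)*`. -/
theorem star_continuity (e : CRE α) (n : ℕ) (hn : 0 < n) :
    CKA e.star ((ltPow e n).mul (pow e n).star) := by
  obtain ⟨m, rfl⟩ := Nat.exists_eq_add_one.mpr hn
  apply FreeCKA.mk_eq_mk_iff.1
  change FreeCKA.mk e.star = FreeCKA.mk (pow (e.union .one) m) * (FreeCKA.mk (pow e (m + 1)))∗
  rw [FreeCKA.mk_pow, FreeCKA.mk_pow]
  exact kstar_eq_add_one_pow_mul_kstar_pow (FreeCKA.mk e) m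

end CKAnote
end
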